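/- arXiv:1610.02540 — 3 statements merged into one kernel-verified Lean document; each statement's English description precedes it below -/
import Mathlib

section
/- Let A₀, A₁, A₂ be non-collinear points in the plane, and let B₀ and B₁ be distinct interior points of the triangle conv{A₀, A₁, A₂}. Then there exist j ∈ {0,1,2} and k ∈ {0,1} such that B_{1-k} lies in the convex hull of {B_k} ∪ ({A₀, A₁, A₂} \ {A_j}). -/
theorem carousel_points (A : Fin 3 → EuclideanSpace ℝ (Fin 2))
    (B : Fin 2 → EuclideanSpace ℝ (Fin 2))
    (hA : ¬ Collinear ℝ (Set.range A))
    (hB : ∀ k, B k ∈ interior (convexHull ℝ (Set.range A)))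
    (hBne : B 0 ≠ B 1) :
    ∃ (j : Fin 3) (k : Fin 2),
      B (1 - k) ∈ convexHull ℝ ({B k} ∪ (Set.range A \ {A j})) := by
  have hind : AffineIndependent ℝ A := affineIndependent_iff_not_collinear.mpr hA
  have htot : affineSpan ℝ (Set.range A) = ⊤ := by
    rw [hind.affineSpan_eq_top_iff_card_eq_finrank_add_one]
    simp [finrank_euclideanSpace]
  let bA : AffineBasis (Fin 3) ℝ (EuclideanSpace ℝ (Fin 2)) := ⟨A, hind, htot⟩
  have hrange : Set.range ⇑bA = Set.range A := rfl
  set a : Fin 3 → ℝ := fun i => bA.coord i (B 0) with ha_def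
  set b : Fin 3 → ℝ := fun i => bA.coord i (B 1) with hb_def
  have ha : ∀ i, 0 < a i := by
    have := hB 0
    rw [← hrange, bA.interior_convexHull] at this
    exact this
  have hbpos : ∀ i, 0 < b i := by
    have := hB 1
    rw [← hrange, bA.interior_convexHull] at this
    exact this
  obtain ⟨j, -, hj⟩ := Finset.exists_min_image Finset.univ (fun i => b i / a i)
    ⟨0, Finset.mem_univ 0⟩
  set t : ℝ := b j / a j with ht_def
  have ht0 : 0 < t := div_pos (hbpos j) (ha j)
  have htaj : t * a j = b j := div_mul_cancel₀ _ (ha j).ne'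
  have hit : ∀ i, t * a i ≤ b i := fun i =>
    (le_div_iff₀ (ha i)).mp (hj i (Finset.mem_univ i))
  have hsa : ∑ i, a i = 1 := bA.sum_coord_apply_eq_one (B 0)
  have hsb : ∑ i, b i = 1 := bA.sum_coord_apply_eq_one (B 1)
  have hB0 : ∑ i, a i • A i = B 0 := bA.linear_combination_coord_eq_self (B 0)
  have hB1 : ∑ i, b i • A i = B 1 := bA.linear_combination_coord_eq_self (B 1)
  refine ⟨j, 0, ?_⟩
  have h10 : (1 - 0 : Fin 2) = 1 := rfl
  rw [h10]
  -- express B 1 as a convex combination of B 0 and the A i, i ≠ j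
  set s : Finset (Option (Fin 3)) := (Finset.univ : Finset (Option (Fin 3))).erase (some j)
    with hs_def
  set w : Option (Fin 3) → ℝ := fun o => o.elim t (fun i => b i - t * a i) with hw_def
  set z : Option (Fin 3) → EuclideanSpace ℝ (Fin 2) := fun o => o.elim (B 0) A with hz_def
  have hwj : w (some j) = 0 := by simp [hw_def, htaj]
  have hsumu : ∑ o, w o = 1 := by
    rw [Fintype.sum_option]
    simp only [hw_def, Option.elim]
    rw [Finset.sum_sub_distrib, hsb, ← Finset.mul_sum, hsa]
    ring
  have hsum : ∑ o ∈ s, w o = 1 := by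
    rw [hs_def, Finset.sum_erase _ hwj, hsumu]
  have hcm : s.centerMass w z = B 1 := by
    rw [Finset.centerMass_eq_of_sum_1 _ _ hsum, hs_def,
      Finset.sum_erase _ (by rw [hwj, zero_smul])]
    rw [Fintype.sum_option]
    simp only [hw_def, hz_def, Option.elim]
    have : ∑ i, (b i - t * a i) • A i = B 1 - t • B 0 := by
      rw [← hB1, ← hB0, Finset.smul_sum, ← Finset.sum_sub_distrib]
      exact Finset.sum_congr rfl fun i _ => by rw [sub_smul, smul_smul]
    rw [this]
    abel
  rw [← hcm]
  refine Finset.centerMass_mem_convexHull s ?_ (by rw [hsum]; norm_num) ?_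
  · rintro (_ | i) hi
    · exact ht0.le
    · exact sub_nonneg.mpr (hit i)
  · rintro (_ | i) hi
    · exact Set.mem_union_left _ rfl
    · refine Set.mem_union_right _ ⟨⟨i, rfl⟩, ?_⟩
      simp only [Set.mem_singleton_iff]
      intro h
      have : i = j := hind.injective h
      subst this
      exact (Finset.mem_erase.mp hi).1 rfl
end

section
/- Let A₀, A₁, A₂ be points in the plane, and let U₀ = C(P₀, r₀) and U₁ = C(P₁, r₁) be circles contained in conv{A₀, A₁, A₂}. Then there exist j ∈ {0,1,2} and k ∈ {0,1} such that U_{1-k} ⊆ conv(U_k ∪ ({A₀, A₁, A₂} \ {A_j})). -/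
/-!
Write `h_k(n) = ⟪P_k, n⟫ + r_k` for the support function of `U_k` and suppose no `j, k` works.
Separating a point of `U_{1-k}` from the closed convex set `conv (U_k ∪ {A_i | A_i ≠ A_j})` gives a
unit vector `n` with `h_k(n) < h_{1-k}(n)` in which `A_j` is the unique farthest vertex. So, on the
set of unit normals at each vertex, `g(n) = ⟪P₁ - P₀, n⟫ - (r₀ - r₁) = h₁(n) - h₀(n)` takes both
signs, hence vanishes somewhere by connectedness. These sets are disjoint for distinct vertices,
while a line meets the unit circle in at most two points, so `g` has at most two unit zeros. This
settles the case of three distinct vertices. Otherwise the triangle has width zero in a direction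
`w` orthogonal to its sides; both circles are then points with `h₀(w) = h₁(w)`, so `w` is a third
zero of `g`, lying in neither set (if all vertices coincide, every direction is such a `w`).
-/

open scoped RealInnerProductSpace
open Metric Module

theorem exists_forall_eq_or_eq_of_not_injective_fin_three {α : Type*} {A : Fin 3 → α}
    (h : ¬ Function.Injective A) : ∃ p s, ∀ i, A i = A p ∨ A i = A s := by
  obtain ⟨p, q, hApq, hpq⟩ : ∃ p q, A p = A q ∧ p ≠ q := by
    simpa [Function.Injective] using h
  have hcover : ∀ p q : Fin 3, p ≠ q → ∃ s, ∀ i, i = p ∨ i = q ∨ i = s := by decide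
  obtain ⟨s, hs⟩ := hcover p q hpq
  refine ⟨p, s, fun i => ?_⟩
  rcases hs i with rfl | rfl | rfl
  exacts [.inl rfl, .inl hApq.symm, .inr rfl]

theorem IsCompact.convexJoin {E : Type*} [AddCommGroup E] [Module ℝ E] [TopologicalSpace E]
    [IsTopologicalAddGroup E] [ContinuousSMul ℝ E] {s t : Set E} (hs : IsCompact s)
    (ht : IsCompact t) : IsCompact (_root_.convexJoin ℝ s t) := by
  have : _root_.convexJoin ℝ s t =
      (fun p : ℝ × E × E => (1 - p.1) • p.2.1 + p.1 • p.2.2) '' Set.Icc 0 1 ×ˢ s ×ˢ t := by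
    ext x
    simp only [mem_convexJoin, segment_eq_image, Set.mem_image, Set.mem_prod, Prod.exists]
    grind
  rw [this]
  exact (isCompact_Icc.prod (hs.prod ht)).image (by fun_prop)

theorem isClosed_convexHull_sphere_union {E : Type*} [NormedAddCommGroup E] [NormedSpace ℝ E]
    [Nontrivial E] [ProperSpace E] (P : E) {r : ℝ} (hr : 0 ≤ r) {F : Set E} (hF : F.Finite) :
    IsClosed (convexHull ℝ (sphere P r ∪ F)) := by
  rcases F.eq_empty_or_nonempty with rfl | hne
  · rw [Set.union_empty, convexHull_sphere_eq_closedBall P hr]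
    exact isClosed_closedBall
  · rw [convexHull_union (NormedSpace.sphere_nonempty.2 hr) hne,
      convexHull_sphere_eq_closedBall P hr]
    exact ((isCompact_closedBall P r).convexJoin (hF.isCompact_convexHull ℝ)).isClosed

section InnerProductSpace

variable {V : Type*} [NormedAddCommGroup V] [InnerProductSpace ℝ V]

theorem exists_norm_eq_one_inner_lt_of_notMem [CompleteSpace V] {K : Set V} (hK : Convex ℝ K)
    (hKc : IsClosed K) (hne : K.Nonempty) {y : V} (hy : y ∉ K) :
    ∃ n : V, ‖n‖ = 1 ∧ ∀ z ∈ K, ⟪z, n⟫ < ⟪y, n⟫ := by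
  obtain ⟨f, u, hfK, hfy⟩ := geometric_hahn_banach_closed_point hK hKc hy
  set w := (InnerProductSpace.toDual ℝ V).symm f
  have hw (x : V) : ⟪x, w⟫ = f x := by
    rw [real_inner_comm]
    exact InnerProductSpace.toDual_symm_apply
  have hw0 : w ≠ 0 := by
    rintro h
    obtain ⟨z, hz⟩ := hne
    have := hfK z hz
    simp only [← hw, h, inner_zero_right] at this hfy
    linarith
  refine ⟨‖w‖⁻¹ • w, norm_smul_inv_norm hw0, fun z hz => ?_⟩
  simp only [real_inner_smul_right, hw]
  gcongr
  exact (hfK z hz).trans hfy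

theorem inner_le_of_mem_sphere {P y n : V} {r : ℝ} (hy : y ∈ sphere P r) (hn : ‖n‖ = 1) :
    ⟪y, n⟫ ≤ ⟪P, n⟫ + r := by
  have := real_inner_le_norm (y - P) n
  rw [inner_sub_left, hn, mul_one, ← dist_eq_norm, mem_sphere.1 hy] at this
  linarith

theorem add_smul_mem_sphere {P n : V} {r : ℝ} (hr : 0 ≤ r) (hn : ‖n‖ = 1) :
    P + r • n ∈ sphere P r := by
  simp [norm_smul, hn, abs_of_nonneg hr]

theorem inner_add_smul_self_of_norm_eq_one {P n : V} {r : ℝ} (hn : ‖n‖ = 1) :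
    ⟪P + r • n, n⟫ = ⟪P, n⟫ + r := by
  rw [inner_add_left, real_inner_smul_left, real_inner_self_eq_norm_sq, hn]
  ring

theorem eq_zero_of_sphere_subset_convexHull {s : Set V} {P w : V} {r α : ℝ} (hr : 0 ≤ r)
    (hw : ‖w‖ = 1) (hs : ∀ x ∈ s, ⟪x, w⟫ = α) (h : sphere P r ⊆ convexHull ℝ s) :
    r = 0 ∧ ⟪P, w⟫ = α := by
  have hsub : sphere P r ⊆ {x | ⟪x, w⟫ = α} := h.trans <| convexHull_min hs <| by
    simpa [real_inner_comm] using convex_hyperplane (innerₛₗ ℝ w).isLinear α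
  have h₁ := hsub (add_smul_mem_sphere hr hw)
  have h₂ := hsub (add_smul_mem_sphere (n := -w) hr (by rwa [norm_neg]))
  simp only [Set.mem_ofPred_eq, smul_neg, inner_add_left, inner_neg_left, real_inner_smul_left,
    real_inner_self_eq_norm_sq, hw] at h₁ h₂
  constructor <;> linarith

def strictNormalCone (s : Set V) (a : V) : Set V :=
  {n | ∀ b ∈ s, b ≠ a → ⟪b, n⟫ < ⟪a, n⟫}

section strictNormalCone

variable {s : Set V} {a : V}

theorem convex_strictNormalCone : Convex ℝ (strictNormalCone s a) := by
  simp only [strictNormalCone, Set.ofPred_forall]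
  refine convex_iInter₂ fun b _ => convex_iInter fun _ => ?_
  simpa [inner_sub_left, sub_neg] using convex_halfSpace_lt (innerₛₗ ℝ (b - a)).isLinear 0

theorem smul_mem_strictNormalCone {n : V} (hn : n ∈ strictNormalCone s a) {t : ℝ} (ht : 0 < t) :
    t • n ∈ strictNormalCone s a := fun b hb hba => by
  simpa [real_inner_smul_right] using mul_lt_mul_of_pos_left (hn b hb hba) ht

theorem zero_notMem_strictNormalCone {b : V} (hb : b ∈ s) (hba : b ≠ a) :
    (0 : V) ∉ strictNormalCone s a := fun h => by
  simpa using h b hb hba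

theorem disjoint_strictNormalCone {a' : V} (ha : a ∈ s) (ha' : a' ∈ s) (h : a ≠ a') :
    Disjoint (strictNormalCone s a) (strictNormalCone s a') :=
  Set.disjoint_left.2 fun _ hn hn' => (hn a' ha' h.symm).not_gt (hn' a ha h)

theorem exists_mem_strictNormalCone_of_not_subset [Nontrivial V] [ProperSpace V]
    (hs : s.Finite) {P P' : V} {r r' : ℝ} (hr : 0 ≤ r) (hP' : sphere P' r' ⊆ convexHull ℝ s)
    (hnot : ¬ sphere P' r' ⊆ convexHull ℝ (sphere P r ∪ (s \ {a}))) :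
    ∃ n ∈ strictNormalCone s a, ‖n‖ = 1 ∧ ⟪P, n⟫ + r < ⟪P', n⟫ + r' := by
  obtain ⟨y, hy, hyK⟩ := Set.not_subset.1 hnot
  have hne : (convexHull ℝ (sphere P r ∪ (s \ {a}))).Nonempty :=
    ((NormedSpace.sphere_nonempty.2 hr).mono Set.subset_union_left).convexHull
  obtain ⟨n, hn, hsep⟩ := exists_norm_eq_one_inner_lt_of_notMem (convex_convexHull ℝ _)
    (isClosed_convexHull_sphere_union P hr hs.sdiff) hne hyK
  have hlt (z) (hz : z ∈ sphere P r ∪ (s \ {a})) : ⟪z, n⟫ < ⟪y, n⟫ :=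
    hsep z (subset_convexHull ℝ _ hz)
  obtain ⟨b, hb, hyb⟩ := ((innerₛₗ ℝ n).convexOn convex_univ).exists_ge_of_mem_convexHull
    (Set.subset_univ s) (hP' hy)
  replace hyb : ⟪y, n⟫ ≤ ⟪b, n⟫ := by simpa [real_inner_comm n] using hyb
  have hba : b = a := by
    by_contra hba
    exact (hlt b (Or.inr ⟨hb, hba⟩)).not_ge hyb
  refine ⟨n, fun b' hb' hb'a => ?_, hn, ?_⟩
  · exact (hlt b' (Or.inr ⟨hb', hb'a⟩)).trans_le (hba ▸ hyb)
  · have := hlt _ (Or.inl (add_smul_mem_sphere hr hn))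
    rw [inner_add_smul_self_of_norm_eq_one hn] at this
    exact this.trans_le (inner_le_of_mem_sphere hy hn)

theorem exists_norm_eq_one_inner_eq_of_mem_strictNormalCone {b : V} (hb : b ∈ s) (hba : b ≠ a)
    {v n₀ n₁ : V} {c : ℝ} (hn₀ : n₀ ∈ strictNormalCone s a) (hn₁ : n₁ ∈ strictNormalCone s a)
    (h₀ : ‖n₀‖ = 1) (h₁ : ‖n₁‖ = 1) (hv₀ : ⟪v, n₀⟫ ≤ c) (hv₁ : c ≤ ⟪v, n₁⟫) :
    ∃ e ∈ strictNormalCone s a, ‖e‖ = 1 ∧ ⟪v, e⟫ = c := by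
  obtain ⟨x, hx, hxc⟩ := convex_strictNormalCone.isPreconnected.intermediate_value₂ hn₀ hn₁
    (f := fun x => ⟪v, x⟫) (g := fun x => c * ‖x‖) (by fun_prop) (by fun_prop)
    (by simpa [h₀]) (by simpa [h₁])
  have hx0 : x ≠ 0 := fun h => zero_notMem_strictNormalCone hb hba (h ▸ hx)
  refine ⟨‖x‖⁻¹ • x, smul_mem_strictNormalCone hx (by positivity), norm_smul_inv_norm hx0, ?_⟩
  rw [real_inner_smul_right, hxc]
  field_simp [norm_ne_zero_iff.2 hx0]

end strictNormalCone

theorem collinear_of_forall_inner_eq (hV : finrank ℝ V = 2) {v : V} (hv : v ≠ 0) {c : ℝ}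
    {S : Set V} (hS : ∀ x ∈ S, ⟪v, x⟫ = c) : Collinear ℝ S := by
  have : Fact (finrank ℝ V = 1 + 1) := ⟨hV⟩
  have : FiniteDimensional ℝ V := .of_fact_finrank_eq_succ 1
  rw [collinear_iff_finrank_le_one]
  have hle : vectorSpan ℝ S ≤ (ℝ ∙ v)ᗮ := by
    rw [vectorSpan_def, Submodule.span_le]
    rintro _ ⟨x, hx, y, hy, rfl⟩
    simp [Submodule.mem_orthogonal_singleton_iff_inner_right, inner_sub_right, hS x hx, hS y hy]
  exact (Submodule.finrank_mono hle).trans (Submodule.finrank_orthogonal_span_singleton hv).le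

theorem eq_or_eq_or_eq_of_norm_eq_one_of_inner_eq (hV : finrank ℝ V = 2) {v : V} (hv : v ≠ 0)
    {c : ℝ} {e₁ e₂ e₃ : V} (h₁ : ‖e₁‖ = 1) (h₂ : ‖e₂‖ = 1) (h₃ : ‖e₃‖ = 1)
    (hc₁ : ⟪v, e₁⟫ = c) (hc₂ : ⟪v, e₂⟫ = c) (hc₃ : ⟪v, e₃⟫ = c) :
    e₁ = e₂ ∨ e₁ = e₃ ∨ e₂ = e₃ := by
  by_contra! h
  have hcos : EuclideanGeometry.Cospherical ({e₁, e₂, e₃} : Set V) :=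
    ⟨0, 1, by simp [h₁, h₂, h₃]⟩
  refine affineIndependent_iff_not_collinear_set.1 (hcos.affineIndependent_of_ne h.1 h.2.1 h.2.2)
    (collinear_of_forall_inner_eq hV hv (c := c) ?_)
  simp [hc₁, hc₂, hc₃]

theorem exists_norm_eq_one_inner_eq_zero (hV : finrank ℝ V = 2) {u : V} (hu : u ≠ 0) :
    ∃ w : V, ‖w‖ = 1 ∧ ⟪u, w⟫ = 0 := by
  have : Fact (finrank ℝ V = 1 + 1) := ⟨hV⟩
  obtain ⟨w, hw, hw0⟩ := Submodule.exists_mem_ne_zero_of_ne_bot (p := (ℝ ∙ u)ᗮ) fun h => by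
    have := Submodule.finrank_orthogonal_span_singleton (𝕜 := ℝ) (n := 1) hu
    rw [h, finrank_bot] at this
    exact zero_ne_one this
  refine ⟨‖w‖⁻¹ • w, norm_smul_inv_norm hw0, ?_⟩
  rw [real_inner_smul_right, Submodule.mem_orthogonal_singleton_iff_inner_right.1 hw, mul_zero]

theorem eq_zero_of_injective_of_forall_mem_strictNormalCone (hV : finrank ℝ V = 2)
    {A : Fin 3 → V} (hA : Function.Injective A) {v : V} {c : ℝ}
    (he : ∀ j, ∃ e ∈ strictNormalCone (Set.range A) (A j), ‖e‖ = 1 ∧ ⟪v, e⟫ = c) : v = 0 := by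
  by_contra hv
  choose e he hne hc using he
  have hdisj {i j : Fin 3} (hij : i ≠ j) :=
    disjoint_strictNormalCone (s := Set.range A) ⟨i, rfl⟩ ⟨j, rfl⟩ (hA.ne hij)
  rcases eq_or_eq_or_eq_of_norm_eq_one_of_inner_eq hV hv (hne 0) (hne 1) (hne 2) (hc 0) (hc 1)
    (hc 2) with h | h | h
  exacts [(hdisj (by decide)).ne_of_mem (he 0) (he 1) h,
    (hdisj (by decide)).ne_of_mem (he 0) (he 2) h, (hdisj (by decide)).ne_of_mem (he 1) (he 2) h]

theorem false_of_sign_change_in_strictNormalCones (hV : finrank ℝ V = 2) (A : Fin 3 → V)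
    {v : V} {c : ℝ}
    (habove : ∀ j, ∃ n ∈ strictNormalCone (Set.range A) (A j), ‖n‖ = 1 ∧ c < ⟪v, n⟫)
    (hbelow : ∀ j, ∃ n ∈ strictNormalCone (Set.range A) (A j), ‖n‖ = 1 ∧ ⟪v, n⟫ < c)
    (hflat : ∀ w α, ‖w‖ = 1 → (∀ x ∈ Set.range A, ⟪x, w⟫ = α) → ⟪v, w⟫ = c) : False := by
  have hv : v ≠ 0 := by
    rintro rfl
    obtain ⟨_, -, -, h₀⟩ := habove 0
    obtain ⟨_, -, -, h₁⟩ := hbelow 0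
    rw [inner_zero_left] at h₀ h₁
    linarith
  have hzero (j i : Fin 3) (hi : A i ≠ A j) :
      ∃ e ∈ strictNormalCone (Set.range A) (A j), ‖e‖ = 1 ∧ ⟪v, e⟫ = c := by
    obtain ⟨n₀, hn₀, h₀, hv₀⟩ := hbelow j
    obtain ⟨n₁, hn₁, h₁, hv₁⟩ := habove j
    exact exists_norm_eq_one_inner_eq_of_mem_strictNormalCone (Set.mem_range_self i) hi hn₀ hn₁
      h₀ h₁ hv₀.le hv₁.le
  by_cases hA : Function.Injective A
  · exact hv (eq_zero_of_injective_of_forall_mem_strictNormalCone hV hA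
      fun j => hzero j (j + 1) (hA.ne (by revert j; decide)))
  obtain ⟨p, s, hps⟩ := exists_forall_eq_or_eq_of_not_injective_fin_three hA
  have hflat' (w : V) (hw : ‖w‖ = 1) (h : ⟪A p, w⟫ = ⟪A s, w⟫) : ⟪v, w⟫ = c := by
    refine hflat w ⟪A p, w⟫ hw ?_
    rintro _ ⟨i, rfl⟩
    rcases hps i with hi | hi <;> simp [hi, h]
  by_cases hpsA : A p = A s
  · obtain ⟨n, -, hn, hlt⟩ := habove p
    exact hlt.ne' (hflat' n hn (by rw [hpsA]))
  obtain ⟨w, hw, hw0⟩ := exists_norm_eq_one_inner_eq_zero hV (sub_ne_zero.2 hpsA)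
  rw [inner_sub_left, sub_eq_zero] at hw0
  obtain ⟨ep, hep, hpn, hpc⟩ := hzero p s (Ne.symm hpsA)
  obtain ⟨es, hes, hsn, hsc⟩ := hzero s p hpsA
  rcases eq_or_eq_or_eq_of_norm_eq_one_of_inner_eq hV hv hw hpn hsn (hflat' w hw hw0) hpc hsc
    with rfl | rfl | h
  · exact (hep (A s) ⟨s, rfl⟩ (Ne.symm hpsA)).ne hw0.symm
  · exact (hes (A p) ⟨p, rfl⟩ hpsA).ne hw0
  · exact (disjoint_strictNormalCone (Set.mem_range_self p) (Set.mem_range_self s) hpsA).ne_of_mem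
      hep hes h

end InnerProductSpace

theorem adaricheva_bolat (A : Fin 3 → EuclideanSpace ℝ (Fin 2))
    (P : Fin 2 → EuclideanSpace ℝ (Fin 2)) (r : Fin 2 → ℝ)
    (hr : ∀ k, 0 ≤ r k)
    (hU : ∀ k, Metric.sphere (P k) (r k) ⊆ convexHull ℝ (Set.range A)) :
    ∃ (j : Fin 3) (k : Fin 2),
      Metric.sphere (P (1 - k)) (r (1 - k)) ⊆
        convexHull ℝ (Metric.sphere (P k) (r k) ∪ (Set.range A \ {A j})) := by
  by_contra! hfail
  have hwit (j : Fin 3) (k : Fin 2) := exists_mem_strictNormalCone_of_not_subset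
    (Set.finite_range A) (hr k) (hU (1 - k)) (hfail j k)
  refine false_of_sign_change_in_strictNormalCones finrank_euclideanSpace_fin A
    (v := P 1 - P 0) (c := r 0 - r 1) (fun j => ?_) (fun j => ?_) fun w α hw hflat => ?_
  · obtain ⟨n, hn, hn1, hlt⟩ := hwit j 0
    simp only [sub_zero] at hlt
    exact ⟨n, hn, hn1, by rw [inner_sub_left]; linarith⟩
  · obtain ⟨n, hn, hn1, hlt⟩ := hwit j 1
    simp only [sub_self] at hlt
    exact ⟨n, hn, hn1, by rw [inner_sub_left]; linarith⟩
  · obtain ⟨hr₀, hP₀⟩ := eq_zero_of_sphere_subset_convexHull (hr 0) hw hflat (hU 0)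
    obtain ⟨hr₁, hP₁⟩ := eq_zero_of_sphere_subset_convexHull (hr 1) hw hflat (hU 1)
    rw [inner_sub_left, hP₀, hP₁, hr₀, hr₁]
    ring
end

section
/- If C₁ = C(P₁,r₁) and C₂ = C(P₂,r₂) are circles in the plane with r₁ ≠ r₂ and neither circle contained in the closed disk bounded by the other, then there exists a point F ∈ ℝ² outside both circles and λ > 0 with C₁ = h_{F,λ}(C₂), where λ = r₁/r₂. -/
theorem externally_perspective_exists (P₁ P₂ : EuclideanSpace ℝ (Fin 2))
    (r₁ r₂ : ℝ) (h₁ : 0 < r₁) (h₂ : 0 < r₂) (hne : r₁ ≠ r₂)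
    (hnc₁ : ¬ Metric.sphere P₁ r₁ ⊆ Metric.closedBall P₂ r₂)
    (hnc₂ : ¬ Metric.sphere P₂ r₂ ⊆ Metric.closedBall P₁ r₁) :
    ∃ F : EuclideanSpace ℝ (Fin 2), ∃ lam : ℝ,
      lam = r₁ / r₂ ∧ 0 < lam ∧
      dist F P₁ > r₁ ∧ dist F P₂ > r₂ ∧
      Metric.sphere P₁ r₁ =
        (fun X => (1 - lam) • F + lam • X) '' Metric.sphere P₂ r₂ := by
  set lam : ℝ := r₁ / r₂ with hlam
  have hl : 0 < lam := div_pos h₁ h₂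
  have hl1 : lam ≠ 1 := by
    simp [hlam, div_eq_one_iff_eq h₂.ne', hne]
  have h1l : (1 : ℝ) - lam ≠ 0 := sub_ne_zero.mpr (Ne.symm hl1)
  set d : ℝ := dist P₁ P₂ with hd
  have hd1 : r₂ - r₁ < d := by
    obtain ⟨X, hX, hX2⟩ := Set.not_subset.mp hnc₁
    rw [Metric.mem_sphere] at hX
    rw [Metric.mem_closedBall, not_le] at hX2
    have := dist_triangle X P₁ P₂
    linarith
  have hd2 : r₁ - r₂ < d := by
    obtain ⟨X, hX, hX2⟩ := Set.not_subset.mp hnc₂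
    rw [Metric.mem_sphere] at hX
    rw [Metric.mem_closedBall, not_le] at hX2
    have := dist_triangle X P₂ P₁
    rw [dist_comm P₂ P₁] at this
    linarith
  have habs : |r₂ - r₁| < d := abs_sub_lt_iff.mpr ⟨hd1, hd2⟩
  have habs0 : 0 < |r₂ - r₁| := abs_pos.mpr (sub_ne_zero.mpr (Ne.symm hne))
  set F : EuclideanSpace ℝ (Fin 2) := (1 - lam)⁻¹ • (P₁ - lam • P₂) with hF
  have key1 : F - P₁ = ((1 - lam)⁻¹ * lam) • (P₁ - P₂) := by
    rw [hF]; match_scalars <;> (field_simp; try ring)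
  have key2 : F - P₂ = (1 - lam)⁻¹ • (P₁ - P₂) := by
    rw [hF]; match_scalars <;> (field_simp; try ring)
  have habs1l : |1 - lam| = |r₂ - r₁| / r₂ := by
    rw [hlam]
    rw [show (1 : ℝ) - r₁ / r₂ = (r₂ - r₁) / r₂ by field_simp]
    rw [abs_div, abs_of_pos h₂]
  have hdist1 : dist F P₁ = r₁ * d / |r₂ - r₁| := by
    rw [dist_eq_norm, key1, norm_smul, ← dist_eq_norm, ← hd]
    rw [Real.norm_eq_abs, abs_mul, abs_inv, habs1l, abs_of_pos hl, hlam]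
    field_simp
  have hdist2 : dist F P₂ = r₂ * d / |r₂ - r₁| := by
    rw [dist_eq_norm, key2, norm_smul, ← dist_eq_norm, ← hd]
    rw [Real.norm_eq_abs, abs_inv, habs1l]
    field_simp
  have hgt1 : dist F P₁ > r₁ := by
    rw [hdist1, gt_iff_lt, lt_div_iff₀ habs0]
    nlinarith
  have hgt2 : dist F P₂ > r₂ := by
    rw [hdist2, gt_iff_lt, lt_div_iff₀ habs0]
    nlinarith
  have keyh : ∀ X : EuclideanSpace ℝ (Fin 2),
      (1 - lam) • F + lam • X = P₁ + lam • (X - P₂) := by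
    intro X
    rw [hF]; match_scalars <;> (field_simp; try ring)
  refine ⟨F, lam, rfl, hl, hgt1, hgt2, ?_⟩
  ext Y
  simp only [Set.mem_image, Metric.mem_sphere]
  constructor
  · intro hY
    refine ⟨P₂ + lam⁻¹ • (Y - P₁), ?_, ?_⟩
    · rw [dist_eq_norm]
      have : P₂ + lam⁻¹ • (Y - P₁) - P₂ = lam⁻¹ • (Y - P₁) := by abel
      rw [this, norm_smul, ← dist_eq_norm, hY, Real.norm_eq_abs, abs_inv, abs_of_pos hl, hlam]
      field_simp
    · rw [keyh]
      have : P₂ + lam⁻¹ • (Y - P₁) - P₂ = lam⁻¹ • (Y - P₁) := by abel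
      rw [this, smul_smul, mul_inv_cancel₀ hl.ne', one_smul]
      abel
  · rintro ⟨X, hX, rfl⟩
    rw [keyh]
    have : P₁ + lam • (X - P₂) - P₁ = lam • (X - P₂) := by abel
    rw [dist_eq_norm, this, norm_smul, ← dist_eq_norm, hX, Real.norm_eq_abs, abs_of_pos hl, hlam]
    field_simp
end
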